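/- (Proposition 6.) Let g : ℰ^N → ℝ be a function on the lattice of embedded subsets whose Möbius inversion μ^g lives only on the modular elements of ℰ^N (i.e., μ^g(B,Q) = 0 unless (B,Q) is of the form (∅,P^C_⊥) for C ⊆ N, (∅,P_⊥), or (A',P^{A'}_⊥) with A' ≠ ∅). Then there exist set functions v, w : 2^N → ℝ with v(∅) = 0 such that g(A,P) = v(A) + Σ_{B ∈ P} w(B) for all (A,P) ∈ ℰ^N. -/

import Mathlib

open scoped BigOperators

/-- `modp n A` is the modular partition `P^A_⊥` of `Fin n` whose unique (possibly)
non-singleton block is `A`, all other blocks being singletons. -/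
def modp (n : ℕ) (A : Set (Fin n)) : Setoid (Fin n) where
  r x y := x = y ∨ (x ∈ A ∧ y ∈ A)
  iseqv := by
    refine ⟨fun _ => Or.inl rfl, ?_, ?_⟩
    · rintro x y (rfl | ⟨hx, hy⟩)
      · exact Or.inl rfl
      · exact Or.inr ⟨hy, hx⟩
    · rintro x y z (rfl | ⟨hx, hy⟩) h
      · exact h
      · rcases h with rfl | ⟨hy', hz⟩
        · exact Or.inr ⟨hx, hy⟩
        · exact Or.inr ⟨hx, hz⟩

/-- The product `X^N = 2^N × 𝒫^N` of the subset lattice and the partition lattice,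
ordered componentwise. -/
abbrev XN (n : ℕ) := Set (Fin n) × Setoid (Fin n)

/-- The closure operator `cl` on `X^N`:  `cl(∅,P) = (∅,P)` and, for `A ≠ ∅`,
`cl(A,P) = (Ā, P ⊔ P^A_⊥)` where `Ā` is the block of `P ⊔ P^A_⊥` containing `A`. -/
def EmbClosure (n : ℕ) (x : XN n) : XN n :=
  ({y | ∃ a ∈ x.1, (x.2 ⊔ modp n x.1) y a}, x.2 ⊔ modp n x.1)

/-- An embedded subset is a pair that coincides with its closure. -/
def IsEmbedded (n : ℕ) (x : XN n) : Prop := EmbClosure n x = x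

/-- The lattice `ℰ^N` of embedded subsets, with the induced order. -/
abbrev Emb (n : ℕ) := {x : XN n // IsEmbedded n x}

lemma modp_le_of_subsingleton {n : ℕ} {A : Set (Fin n)} (h : A.Subsingleton)
    (Q : Setoid (Fin n)) : modp n A ≤ Q := by
  rw [Setoid.le_def]
  intro x y hxy
  rcases hxy with rfl | ⟨hx, hy⟩
  · exact Q.refl' x
  · obtain rfl := h hx hy
    exact Q.refl' x

lemma modp_eq_bot_of_subsingleton {n : ℕ} {A : Set (Fin n)} (h : A.Subsingleton) :
    modp n A = ⊥ :=
  le_antisymm (modp_le_of_subsingleton h ⊥) bot_le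

lemma embedded_empty (n : ℕ) (Q : Setoid (Fin n)) : IsEmbedded n (∅, Q) := by
  unfold IsEmbedded EmbClosure
  refine Prod.ext ?_ ?_
  · simp
  · simpa using sup_eq_left.mpr (modp_le_of_subsingleton Set.subsingleton_empty Q)

lemma embedded_univ_top (n : ℕ) : IsEmbedded n (Set.univ, ⊤) := by
  unfold IsEmbedded EmbClosure
  refine Prod.ext ?_ ?_
  · ext y
    simp only [Set.mem_setOf_eq, Set.mem_univ, iff_true]
    exact ⟨y, trivial, Setoid.refl' _ y⟩
  · exact sup_eq_left.mpr le_top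

lemma embedded_singleton (n : ℕ) (i : Fin n) : IsEmbedded n ({i}, ⊥) := by
  have hb : modp n ({i} : Set (Fin n)) = ⊥ :=
    modp_eq_bot_of_subsingleton Set.subsingleton_singleton
  unfold IsEmbedded EmbClosure
  refine Prod.ext ?_ ?_
  · ext y
    simp only [Set.mem_setOf_eq, hb, sup_idem, Set.mem_singleton_iff]
    constructor
    · rintro ⟨a, ha, hrel⟩
      subst ha
      have h2 : (⊥ ⊔ modp n ({a} : Set (Fin n))) y a := hrel
      rw [modp_eq_bot_of_subsingleton Set.subsingleton_singleton, sup_idem] at h2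
      simpa [Setoid.bot_def] using h2
    · rintro rfl
      exact ⟨y, rfl, Setoid.refl' _ y⟩
  · simp [hb]

/-- The bottom element `(∅, P_⊥)` of `ℰ^N`. -/
def botE (n : ℕ) : Emb n := ⟨(∅, ⊥), embedded_empty n ⊥⟩

/-- The top element `(N, P^⊤)` of `ℰ^N`. -/
def topE (n : ℕ) : Emb n := ⟨(Set.univ, ⊤), embedded_univ_top n⟩

/-- The atom `({i}, P_⊥)` of `ℰ^N`. -/
def atomS (n : ℕ) (i : Fin n) : Emb n := ⟨({i}, ⊥), embedded_singleton n i⟩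

/-- The atom `(∅, [ij])` of `ℰ^N`, where `[ij]` is the atom of the partition lattice
whose unique non-singleton block is the pair `{i, j}`. -/
def atomP (n : ℕ) (i j : Fin n) : Emb n := ⟨(∅, modp n {i, j}), embedded_empty n _⟩

/-- A pair is an atom candidate: of the form `({i},P_⊥)` or `(∅,[ij])` with `i ≠ j`. -/
def IsAtomPair (n : ℕ) (a : XN n) : Prop :=
  (∃ i : Fin n, a = ({i}, ⊥)) ∨ ∃ i j : Fin n, i ≠ j ∧ a = (∅, modp n {i, j})

/-- The number of blocks `|P|` of a partition. -/
noncomputable def numBlocks {α : Type*} (P : Setoid α) : ℕ := P.classes.ncard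

/-- The rank function `r(A,P) = (n − |P|) + min{|A|,1}` of `ℰ^N`. -/
noncomputable def erank (n : ℕ) (x : XN n) : ℕ := (n - numBlocks x.2) + min x.1.ncard 1

/-- The partition `Q^S` of `S` induced by a partition `Q` of `N`. -/
def indPart {n : ℕ} (S : Set (Fin n)) (Q : Setoid (Fin n)) : Setoid S :=
  Setoid.comap Subtype.val Q

/-- `mu` is the Möbius function of the (finite) poset `α`. -/
def IsMobius {α : Type*} [PartialOrder α] (mu : α → α → ℤ) : Prop :=
  (∀ x, mu x x = 1) ∧
  (∀ x y, ¬x ≤ y → mu x y = 0) ∧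
  (∀ x y, x < y → mu x y = -∑ᶠ z ∈ Set.Ico x y, mu x z)


/-!
By Möbius inversion, `g (A, P)` is the sum of `μ^g` over the modular elements below `(A, P)`.
These are the `(A', P^{A'}_⊥)` with `∅ ≠ A' ⊆ A`, whose sum is `v A`, and the `(∅, P^C_⊥)` with
`P^C_⊥ ≤ P`. Among the latter, every `C` with `|C| ≥ 2` lies in exactly one block of `P`, so their
sum splits over the blocks; the remaining one, `(∅, P_⊥)`, is charged to the block of a fixed point.
-/

section Mobius

variable {α : Type*} [PartialOrder α] [Finite α] {mu : α → α → ℤ}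

theorem IsMobius.finsum_Icc [DecidableEq α] (hmu : IsMobius mu) {z x : α} (hzx : z ≤ x) :
    ∑ᶠ y ∈ Set.Icc z x, mu z y = if z = x then 1 else 0 := by
  rcases hzx.eq_or_lt with rfl | hlt
  · simp [hmu.1]
  · rw [← Set.Ico_insert_right hzx, finsum_mem_insert _ (by simp) (Set.toFinite _),
      hmu.2.2 z x hlt, if_neg hlt.ne, neg_add_cancel]

theorem IsMobius.eq_finsum_Iic (hmu : IsMobius mu) {R : Type*} [Ring R] (f : α → R) (x : α) :
    f x = ∑ᶠ y ∈ Set.Iic x, ∑ᶠ z ∈ Set.Iic y, (mu z y : R) * f z := by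
  classical
  have := Fintype.ofFinite α
  have hδ : ∀ z ∈ (Set.Iic x).toFinset,
      ∑ y ∈ (Set.Icc z x).toFinset, (mu z y : R) * f z = if z = x then f z else 0 := by
    intro z hz
    rw [Set.mem_toFinset] at hz
    rw [← Finset.sum_mul, ← Int.cast_sum, ← finsum_mem_eq_toFinset_sum, hmu.finsum_Icc hz]
    split_ifs <;> simp
  simp only [finsum_mem_eq_toFinset_sum]
  rw [Finset.sum_comm' (t' := (Set.Iic x).toFinset) (s' := fun z => (Set.Icc z x).toFinset),
    Finset.sum_congr rfl hδ, Finset.sum_ite_eq']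
  · simp
  · simp only [Set.mem_toFinset, Set.mem_Iic, Set.mem_Icc]
    exact fun y z => ⟨fun ⟨hyx, hzy⟩ => ⟨⟨hzy, hyx⟩, hzy.trans hyx⟩,
      fun ⟨⟨hzy, hyx⟩, _⟩ => ⟨hyx, hzy⟩⟩

end Mobius

namespace Setoid

variable {α M : Type*} [Finite α] [AddCommMonoid M]

instance : Finite (Setoid α) :=
  Finite.of_injective (fun P : Setoid α => P.r) fun _ _ h =>
    Setoid.ext fun a b => Iff.of_eq (congrFun (congrFun h a) b)

open Classical in
theorem finsum_mem_classes_ite_mem (P : Setoid α) (a : α) (c : M) :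
    ∑ᶠ B ∈ P.classes, (if a ∈ B then c else 0) = c := by
  have hB₀ : {x | P x a} ∈ P.classes := P.mem_classes a
  have ha : a ∈ {x | P x a} := P.refl' a
  rw [← Set.insert_sdiff_self_of_mem hB₀, finsum_mem_insert _ (by simp) (Set.toFinite _),
    if_pos ha, finsum_mem_of_eqOn_zero, add_zero]
  exact fun B hB => if_neg fun haB => hB.2 (eq_of_mem_classes hB.1 haB hB₀ ha)

theorem finsum_mem_setOf_rel_eq_finsum_classes (P : Setoid α) {p : Set α → Prop}
    (hp : ∀ C, p C → C.Nonempty) (f : Set α → M) :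
    ∑ᶠ C ∈ {C | p C ∧ ∀ a ∈ C, ∀ b ∈ C, P a b}, f C
      = ∑ᶠ B ∈ P.classes, ∑ᶠ C ∈ {C | p C ∧ C ⊆ B}, f C := by
  have hunion : {C | p C ∧ ∀ a ∈ C, ∀ b ∈ C, P a b} = ⋃ B ∈ P.classes, {C | p C ∧ C ⊆ B} := by
    ext C
    simp only [Set.mem_ofPred_eq, Set.mem_iUnion, exists_prop]
    constructor
    · rintro ⟨hC, hrel⟩
      obtain ⟨a, ha⟩ := hp C hC
      exact ⟨_, P.mem_classes a, hC, fun b hb => hrel b hb a ha⟩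
    · rintro ⟨B, hB, hC, hCB⟩
      exact ⟨hC, fun a ha b hb => P.rel_iff_exists_classes.mpr ⟨B, hB, hCB ha, hCB hb⟩⟩
  have hdisj : P.classes.PairwiseDisjoint fun B => {C | p C ∧ C ⊆ B} := by
    intro B₁ hB₁ B₂ hB₂ hne
    refine Set.disjoint_left.mpr fun C ⟨hC, hCB₁⟩ ⟨_, hCB₂⟩ => hne ?_
    obtain ⟨a, ha⟩ := hp C hC
    exact eq_of_mem_classes hB₁ (hCB₁ ha) hB₂ (hCB₂ ha)
  rw [hunion, finsum_mem_biUnion hdisj (Set.toFinite _) fun _ _ => Set.toFinite _]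

end Setoid

section ModularPartitions

variable {n : ℕ}

theorem modp_le_iff {C : Set (Fin n)} {P : Setoid (Fin n)} :
    modp n C ≤ P ↔ ∀ a ∈ C, ∀ b ∈ C, P a b := by
  rw [Setoid.le_def]
  constructor
  · exact fun h a ha b hb => h (Or.inr ⟨ha, hb⟩)
  · rintro h x y (rfl | ⟨hx, hy⟩)
    exacts [P.refl' x, h x hx y hy]

theorem modp_mono {A B : Set (Fin n)} (h : A ⊆ B) : modp n A ≤ modp n B :=
  modp_le_iff.mpr fun _ ha _ hb => Or.inr ⟨h ha, h hb⟩

theorem modp_ne_bot {C : Set (Fin n)} (h : 2 ≤ C.ncard) : modp n C ≠ ⊥ := by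
  intro hbot
  obtain ⟨a, ha, b, hb, hab⟩ := (Set.one_lt_ncard C.toFinite).mp h
  have hrel : modp n C a b := Or.inr ⟨ha, hb⟩
  rw [hbot] at hrel
  exact hab hrel

theorem subset_of_modp_eq {C C' : Set (Fin n)} (hC : 2 ≤ C.ncard)
    (h : modp n C = modp n C') : C ⊆ C' := by
  intro a ha
  obtain ⟨b, hb, hba⟩ := Set.exists_ne_of_one_lt_ncard hC a
  have hrel : modp n C' a b := h ▸ Or.inr ⟨ha, hb⟩
  rcases hrel with rfl | ⟨ha', _⟩
  exacts [absurd rfl hba, ha']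

theorem modp_injOn : Set.InjOn (modp n) {C | 2 ≤ C.ncard} := fun _ hC _ hC' h =>
  (subset_of_modp_eq hC h).antisymm (subset_of_modp_eq hC' h.symm)

theorem range_modp_inter_Iic (P : Setoid (Fin n)) :
    Set.range (modp n) ∩ Set.Iic P
      = insert ⊥ (modp n '' {C | 2 ≤ C.ncard ∧ modp n C ≤ P}) := by
  ext Q
  simp only [Set.mem_inter_iff, Set.mem_range, Set.mem_Iic, Set.mem_insert_iff, Set.mem_image,
    Set.mem_ofPred_eq]
  constructor
  · rintro ⟨⟨C, rfl⟩, hle⟩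
    by_cases hC : 2 ≤ C.ncard
    · exact Or.inr ⟨C, ⟨hC, hle⟩, rfl⟩
    · exact Or.inl (modp_eq_bot_of_subsingleton
        (Set.ncard_le_one_iff_subsingleton.mp (by omega)))
  · rintro (rfl | ⟨C, ⟨_, hle⟩, rfl⟩)
    exacts [⟨⟨∅, modp_eq_bot_of_subsingleton Set.subsingleton_empty⟩, bot_le⟩, ⟨⟨C, rfl⟩, hle⟩]

theorem finsum_mem_range_modp_inter_Iic {M : Type*} [AddCommMonoid M] (P : Setoid (Fin n))
    (f : Setoid (Fin n) → M) :
    ∑ᶠ Q ∈ Set.range (modp n) ∩ Set.Iic P, f Q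
      = f ⊥ + ∑ᶠ C ∈ {C | 2 ≤ C.ncard ∧ modp n C ≤ P}, f (modp n C) := by
  have hbot : ⊥ ∉ modp n '' {C | 2 ≤ C.ncard ∧ modp n C ≤ P} :=
    fun ⟨_, ⟨hC, _⟩, h⟩ => modp_ne_bot hC h
  rw [range_modp_inter_Iic, finsum_mem_insert _ hbot (Set.toFinite _),
    finsum_mem_image (modp_injOn.mono fun _ hC => hC.1)]

end ModularPartitions

section ModularElements

variable {n : ℕ}

theorem isEmbedded_modp (A : Set (Fin n)) : IsEmbedded n (A, modp n A) := by
  refine Prod.ext (Set.ext fun y => ?_) (sup_idem _)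
  show (∃ a ∈ A, (modp n A ⊔ modp n A) y a) ↔ y ∈ A
  rw [sup_idem]
  constructor
  · rintro ⟨a, ha, rfl | ⟨hy, _⟩⟩
    exacts [ha, hy]
  · exact fun hy => ⟨y, hy, Or.inl rfl⟩

theorem modp_le_of_isEmbedded {x : XN n} (h : IsEmbedded n x) : modp n x.1 ≤ x.2 :=
  sup_eq_left.mp (congrArg Prod.snd h)

def embOfSet (n : ℕ) (A : Set (Fin n)) : Emb n := ⟨(A, modp n A), isEmbedded_modp A⟩

def embOfPart (n : ℕ) (Q : Setoid (Fin n)) : Emb n := ⟨(∅, Q), embedded_empty n Q⟩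

theorem embOfSet_injective : Function.Injective (embOfSet n) := fun _ _ h =>
  congrArg (fun y : Emb n => y.val.1) h

theorem embOfPart_injective : Function.Injective (embOfPart n) := fun _ _ h =>
  congrArg (fun y : Emb n => y.val.2) h

theorem embOfSet_le_iff {A : Set (Fin n)} {x : Emb n} : embOfSet n A ≤ x ↔ A ⊆ x.val.1 :=
  ⟨And.left, fun h => ⟨h, (modp_mono h).trans (modp_le_of_isEmbedded x.prop)⟩⟩

theorem embOfPart_le_iff {Q : Setoid (Fin n)} {x : Emb n} : embOfPart n Q ≤ x ↔ Q ≤ x.val.2 :=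
  ⟨And.right, fun h => ⟨Set.empty_subset _, h⟩⟩

def modularEmb (n : ℕ) : Set (Emb n) :=
  {y | (∃ C : Set (Fin n), y.val = (∅, modp n C)) ∨
    (∃ A' : Set (Fin n), A' ≠ ∅ ∧ y.val = (A', modp n A'))}

theorem Iic_inter_modularEmb (x : Emb n) :
    Set.Iic x ∩ modularEmb n = embOfSet n '' {A' | A' ≠ ∅ ∧ A' ⊆ x.val.1}
      ∪ embOfPart n '' (Set.range (modp n) ∩ Set.Iic x.val.2) := by
  ext y
  constructor
  · rintro ⟨hyx, ⟨C, hC⟩ | ⟨A', hA', hA'y⟩⟩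
    · have hy : y = embOfPart n (modp n C) := Subtype.ext hC
      subst hy
      exact Or.inr ⟨_, ⟨⟨C, rfl⟩, embOfPart_le_iff.mp hyx⟩, rfl⟩
    · have hy : y = embOfSet n A' := Subtype.ext hA'y
      subst hy
      exact Or.inl ⟨A', ⟨hA', embOfSet_le_iff.mp hyx⟩, rfl⟩
  · rintro (⟨A', ⟨hA', hle⟩, rfl⟩ | ⟨_, ⟨⟨C, rfl⟩, hle⟩, rfl⟩)
    · exact ⟨embOfSet_le_iff.mpr hle, Or.inr ⟨A', hA', rfl⟩⟩
    · exact ⟨embOfPart_le_iff.mpr hle, Or.inl ⟨C, rfl⟩⟩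

theorem finsum_mem_Iic_inter_modularEmb {M : Type*} [AddCommMonoid M] (x : Emb n)
    (f : Emb n → M) :
    ∑ᶠ y ∈ Set.Iic x ∩ modularEmb n, f y
      = ∑ᶠ A' ∈ {A' | A' ≠ ∅ ∧ A' ⊆ x.val.1}, f (embOfSet n A')
        + ∑ᶠ Q ∈ Set.range (modp n) ∩ Set.Iic x.val.2, f (embOfPart n Q) := by
  have hdisj : Disjoint (embOfSet n '' {A' | A' ≠ ∅ ∧ A' ⊆ x.val.1})
      (embOfPart n '' (Set.range (modp n) ∩ Set.Iic x.val.2)) := by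
    refine Set.disjoint_left.mpr ?_
    rintro _ ⟨A', ⟨hA', _⟩, rfl⟩ ⟨Q, _, hQ⟩
    exact hA' (congrArg (fun y : Emb n => y.val.1) hQ).symm
  rw [Iic_inter_modularEmb, finsum_mem_union hdisj (Set.toFinite _) (Set.toFinite _),
    finsum_mem_image embOfSet_injective.injOn, finsum_mem_image embOfPart_injective.injOn]

end ModularElements

theorem modular_support_decomposition (n : ℕ) (hn : 1 ≤ n) (g : Emb n → ℝ)
    (mu : Emb n → Emb n → ℤ) (hmu : IsMobius mu)
    (hsupp : ∀ x : Emb n,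
      ¬((∃ C : Set (Fin n), x.val = (∅, modp n C)) ∨
        (∃ A' : Set (Fin n), A' ≠ ∅ ∧ x.val = (A', modp n A'))) →
      ∑ᶠ y ∈ Set.Iic x, (mu y x : ℝ) * g y = 0) :
    ∃ v w : Set (Fin n) → ℝ, v ∅ = 0 ∧
      ∀ x : Emb n, g x = v x.val.1 + ∑ᶠ B ∈ x.val.2.classes, w B := by
  classical
  set μg : Emb n → ℝ := fun y => ∑ᶠ z ∈ Set.Iic y, (mu z y : ℝ) * g z
  have hμg : Function.support μg ⊆ modularEmb n := fun y hy => by_contra fun h => hy (hsupp y h)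
  refine ⟨fun A => ∑ᶠ A' ∈ {A' | A' ≠ ∅ ∧ A' ⊆ A}, μg (embOfSet n A'),
    fun B => (if (⟨0, hn⟩ : Fin n) ∈ B then μg (embOfPart n ⊥) else 0)
      + ∑ᶠ C ∈ {C | 2 ≤ C.ncard ∧ C ⊆ B}, μg (embOfPart n (modp n C)), by simp, fun x => ?_⟩
  have hclasses := x.val.2.finsum_mem_setOf_rel_eq_finsum_classes
    (fun C (hC : 2 ≤ C.ncard) => Set.nonempty_of_ncard_ne_zero (by omega))
    (fun C => μg (embOfPart n (modp n C)))
  simp only [← modp_le_iff] at hclasses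
  have hg : g x = ∑ᶠ y ∈ Set.Iic x ∩ modularEmb n, μg y :=
    (hmu.eq_finsum_Iic g x).trans (finsum_mem_inter_support_eq μg _ _
      (by rw [Set.inter_assoc, Set.inter_eq_right.mpr hμg]))
  beta_reduce
  rw [hg, finsum_mem_Iic_inter_modularEmb, finsum_mem_range_modp_inter_Iic, hclasses,
    finsum_mem_add_distrib (Set.toFinite _), Setoid.finsum_mem_classes_ite_mem]
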